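/- The ℤ₃[A₄]-lattice L₃(ℤ₃) is a projective ℤ₃[A₄]-module. -/

import Mathlib

/-- `A₄`, the alternating group on 4 letters. -/
abbrev A4 : Type := alternatingGroup (Fin 4)

/-- `a = (12)(34)` as an element of `A₄`. -/
def aP : A4 := ⟨Equiv.swap 0 1 * Equiv.swap 2 3, Equiv.Perm.mem_alternatingGroup.mpr (by decide)⟩
/-- `b = (13)(24)` as an element of `A₄`. -/
def bP : A4 := ⟨Equiv.swap 0 2 * Equiv.swap 1 3, Equiv.Perm.mem_alternatingGroup.mpr (by decide)⟩
/-- `c = (14)(23)` as an element of `A₄`. -/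
def cP : A4 := ⟨Equiv.swap 0 3 * Equiv.swap 1 2, Equiv.Perm.mem_alternatingGroup.mpr (by decide)⟩

/-- The Klein four subgroup `V₄ = {1, (12)(34), (13)(24), (14)(23)}` of `A₄`. -/
def V4 : Subgroup A4 where
  carrier := {1, aP, bP, cP}
  one_mem' := Or.inl rfl
  mul_mem' := by
    intro a b ha hb
    simp only [Set.mem_insert_iff, Set.mem_singleton_iff] at *
    revert ha hb; revert a b
    decide
  inv_mem' := by
    intro a ha
    simp only [Set.mem_insert_iff, Set.mem_singleton_iff] at *
    revert ha; revert a
    decide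

/-- The 3-cycle `(123)` (acting as `0 ↦ 1 ↦ 2 ↦ 0`), generating the complement `C₃` in
`A₄ = V₄ ⋊ C₃`. -/
def sigma3 : A4 :=
  ⟨Equiv.swap 0 1 * Equiv.swap 1 2, Equiv.Perm.mem_alternatingGroup.mpr (by decide)⟩

/-- The three double transpositions of `V₄ ∖ {1}`, indexing the basis of `L₃`. -/
def tIdx : Fin 3 → A4 := ![aP, bP, cP]

/-- The index of the conjugate `g t g⁻¹` of a double transposition `t`. -/
def conjIdx (g : A4) (i : Fin 3) : Fin 3 :=
  if g * tIdx i * g⁻¹ = aP then 0 else if g * tIdx i * g⁻¹ = bP then 1 else 2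

/-- The exponent `k` such that `g ∈ V₄ · σ^k` in the decomposition `A₄ = V₄ ⋊ ⟨σ⟩`. -/
def kExp (g : A4) : ℕ :=
  if g * aP * g⁻¹ = aP then 0
  else if g * aP * g⁻¹ = sigma3 * aP * sigma3⁻¹ then 1 else 2

/-- The `V₄`-part `v` of the decomposition `g = v · σ^k`. -/
def vPart (g : A4) : A4 := g * (sigma3 ^ kExp g)⁻¹

/-- The sign `χ_t(v)` with which `g = v·h` acts on the basis vector `e_t`, where
`χ_t : V₄ → {±1}` is the character with kernel `{1, t}`: the coefficient produced on the
target basis vector `e_{hth⁻¹}` is `χ_t(v)`, i.e. the coefficient of the monomial matrix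
in column `t` is `χ_{hth⁻¹}(v) = χ_t(h⁻¹vh)`. -/
def epsSign (g : A4) (i : Fin 3) : ℤ :=
  if vPart g = 1 ∨ vPart g = tIdx (conjIdx g i) then 1 else -1

/-- The integral monomial matrix of `g` acting on `L₃`: `(v·h) · e_t = χ_t(v) · e_{hth⁻¹}`. -/
def L3IntMat (g : A4) : Matrix (Fin 3) (Fin 3) ℤ :=
  Matrix.of fun j i => if j = conjIdx g i then epsSign g i else 0

set_option maxRecDepth 10000 in
lemma L3IntMat_one : L3IntMat 1 = 1 := by decide

set_option maxRecDepth 100000 in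
lemma L3IntMat_mul : ∀ g h : A4, L3IntMat (g * h) = L3IntMat g * L3IntMat h := by decide

/-- The lattice `L₃(R)`, free of rank 3 over `R` with basis `(e_t)` indexed by the three
double transpositions `t ∈ V₄ ∖ {1}`: writing `A₄ = V₄ ⋊ C₃` with `C₃ = ⟨(123)⟩`, the
element `v·h` acts by `(v·h) · e_t = χ_t(v) · e_{hth⁻¹}`. -/
def L3Rep (R : Type*) [CommRing R] : Representation R A4 (Fin 3 → R) where
  toFun g := ((L3IntMat g).map (Int.castRingHom R)).mulVecLin
  map_one' := by
    rw [L3IntMat_one, Matrix.map_one _ (map_zero _) (map_one _), Matrix.mulVecLin_one]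
    rfl
  map_mul' g h := by
    rw [L3IntMat_mul, Matrix.map_mul, Matrix.mulVecLin_mul]
    rfl

/-!
The rank-one operator `ψ = ¼ · (projection onto the line of e_a)` satisfies `∑_g g⁻¹ ψ g = id`,
because its conjugates are the quarter-projections onto the three lines `ℤ₃ e_t`, each reached by
the four elements of a coset of `V₄`. Averaging then turns `ψ`, which factors through
`ℤ₃[A₄] → L₃, x ↦ x · ¼ e_a`, into an `A₄`-equivariant section `v ↦ ∑_g (g v)_a g⁻¹` of that map,
so `L₃` is a direct summand of the free module `ℤ₃[A₄]`.
-/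

open MonoidAlgebra

section SumOfConjugates

variable {k G V P : Type*} [CommRing k] [Group G] [Fintype G]
  [AddCommGroup V] [Module k V] [Module k[G] V] [IsScalarTower k k[G] V]
  [AddCommGroup P] [Module k P] [Module k[G] P] [IsScalarTower k k[G] P]

theorem Module.Projective.of_sumOfConjugates_eq_id [Module.Projective k[G] P]
    (s : P →ₗ[k[G]] V) (π : V →ₗ[k] P)
    (h : (s.restrictScalars k ∘ₗ π).sumOfConjugates G = LinearMap.id) :
    Module.Projective k[G] V := by
  refine .of_split (π.sumOfConjugatesEquivariant G) s (LinearMap.ext fun v => ?_)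
  simpa [LinearMap.sumOfConjugatesEquivariant_apply, LinearMap.sumOfConjugates_apply,
    LinearMap.conjugate_apply, map_sum] using LinearMap.congr_fun h v

end SumOfConjugates

namespace Representation

variable {k G V : Type*} [CommRing k] [Group G] [Fintype G] [AddCommGroup V] [Module k V]

theorem projective_asModule_of_sum_conj_smulRight_eq_one (ρ : Representation k G V)
    (f : V →ₗ[k] k) (v₀ : V) (h : ∑ g : G, ρ g⁻¹ * f.smulRight v₀ * ρ g = 1) :
    Module.Projective k[G] ρ.asModule := by
  refine .of_sumOfConjugates_eq_id (P := k[G])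
    (LinearMap.toSpanSingleton k[G] _ (ρ.asModuleEquiv.symm v₀))
    (f.smulRight (1 : k[G]) ∘ₗ ρ.asModuleEquiv.toLinearMap) (LinearMap.ext fun v => ?_)
  obtain ⟨w, rfl⟩ := ρ.asModuleEquiv.symm.surjective v
  have hsingle (g : G) (x : V) : single g (1 : k) • ρ.asModuleEquiv.symm x =
      ρ.asModuleEquiv.symm (ρ g x) := (ρ.asModuleEquiv_symm_map_rho g x).symm
  simp only [LinearMap.sumOfConjugates_apply, LinearMap.conjugate_apply, hsingle,
    LinearMap.comp_apply, LinearMap.restrictScalars_apply, LinearEquiv.coe_coe,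
    LinearEquiv.apply_symm_apply, LinearMap.smulRight_apply, LinearMap.toSpanSingleton_apply,
    smul_assoc, one_smul, ← LinearEquiv.map_smul, ← map_sum, LinearMap.id_apply]
  simpa using congr(ρ.asModuleEquiv.symm ($h w))

end Representation

set_option maxRecDepth 100000 in
lemma sum_L3IntMat_conj_single :
    ∑ g : A4, L3IntMat g⁻¹ * Matrix.single 0 0 1 * L3IntMat g = 4 := by
  decide

theorem L3Rep_projective_of_isUnit_four (R : Type*) [CommRing R] (h4 : IsUnit (4 : R)) :
    Module.Projective R[A4] (L3Rep R).asModule := by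
  obtain ⟨c, hc⟩ := h4.exists_left_inv
  let φ : Matrix (Fin 3) (Fin 3) ℤ →+* Module.End R (Fin 3 → R) :=
    Matrix.toLinAlgEquiv'.toRingHom.comp (Int.castRingHom R).mapMatrix
  have hρ (g : A4) : L3Rep R g = φ (L3IntMat g) := rfl
  have hψ : (LinearMap.proj 0).smulRight (Pi.single 0 c) = c • φ (Matrix.single 0 0 1) := by
    refine LinearMap.ext fun v => ?_
    simp [φ, -Int.coe_castRingHom, Matrix.single_mulVec_eq, ← Pi.single_smul, mul_comm]
  refine (L3Rep R).projective_asModule_of_sum_conj_smulRight_eq_one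
    (LinearMap.proj 0) (Pi.single 0 c) ?_
  calc ∑ g : A4, L3Rep R g⁻¹ * (LinearMap.proj 0).smulRight (Pi.single 0 c) * L3Rep R g
      = c • φ (∑ g : A4, L3IntMat g⁻¹ * Matrix.single 0 0 1 * L3IntMat g) := by
        simp only [hρ, hψ, map_sum, map_mul, Finset.smul_sum, mul_smul_comm, smul_mul_assoc]
    _ = 1 := by
        rw [sum_L3IntMat_conj_single, map_ofNat, Algebra.smul_def,
          ← map_ofNat (algebraMap R _) 4, ← map_mul, hc, map_one]

/-- The `ℤ₃[A₄]`-lattice `L₃(ℤ₃)` is a projective `ℤ₃[A₄]`-module. -/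
theorem L3_Z3_projective :
    Module.Projective (MonoidAlgebra ℤ_[3] A4) (L3Rep ℤ_[3]).asModule := by
  refine L3Rep_projective_of_isUnit_four ℤ_[3] ?_
  rw [PadicInt.isUnit_iff, show (4 : ℤ_[3]) = ((4 : ℕ) : ℤ_[3]) by norm_cast,
    PadicInt.norm_natCast_eq_one_iff]
  norm_num
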